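/- For every x ∈ ℝ³, the determinant of the 3×3 matrix with columns F₀(x), F₁(x), F₀₁(x) equals c₃c₅c₇²x₃; consequently F₀(x), F₁(x), F₀₁(x) are linearly independent (span ℝ³) if and only if x₃ ≠ 0. -/

import Mathlib

/-!
Since `F₁` is constant, `[F₀, F₁](x) = -F₀'(x) F₁ = -c₇ ∂F₀/∂x₁ = (-c₁c₇, 0, -c₅c₇)`, independent
of `x`. Expanding the determinant along the second column (where only `F₁` has the nonzero entry
`c₇`) gives `c₃c₅c₇² x₃`, and the three vectors form a basis exactly when this determinant is
nonzero, i.e. when `x₃ ≠ 0`.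
-/

noncomputable section

/-- Lie bracket of vector fields on ℝ³: `[F,G](x) = G'(x)F(x) − F'(x)G(x)`. -/
def lieBracket (F G : (Fin 3 → ℝ) → (Fin 3 → ℝ)) (x : Fin 3 → ℝ) : Fin 3 → ℝ :=
  fderiv ℝ G x (F x) - fderiv ℝ F x (G x)

/-- Drift vector field of the electric vehicle. -/
def F0 (c1 c2 c3 c4 c5 c6 : ℝ) (x : Fin 3 → ℝ) : Fin 3 → ℝ :=
  ![c1 * x 0 + c2 * x 2, c3 * x 2, c4 + c5 * x 0 + c6 * (x 2) ^ 2]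

/-- Control vector field of the electric vehicle. -/
def F1 (c7 : ℝ) (_x : Fin 3 → ℝ) : Fin 3 → ℝ := ![c7, 0, 0]

open Matrix

section LinearAlgebra

variable {K m : Type*} [Field K] [Fintype m] [DecidableEq m]

theorem Matrix.linearIndependent_col_iff_det_ne_zero (A : Matrix m m K) :
    LinearIndependent K A.col ↔ A.det ≠ 0 :=
  linearIndependent_cols_iff_isUnit.trans (isUnit_iff_isUnit_det A |>.trans isUnit_iff_ne_zero)

theorem Matrix.span_range_col_eq_top_iff_det_ne_zero (A : Matrix m m K) :
    Submodule.span K (Set.range A.col) = ⊤ ↔ A.det ≠ 0 := by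
  rw [← range_mulVecLin, LinearMap.range_eq_top, coe_mulVecLin, mulVec_surjective_iff_isUnit,
    isUnit_iff_isUnit_det, isUnit_iff_ne_zero]

end LinearAlgebra

theorem lieBracket_const_right (F : (Fin 3 → ℝ) → (Fin 3 → ℝ)) (v x : Fin 3 → ℝ) :
    lieBracket F (fun _ => v) x = -fderiv ℝ F x v := by
  simp [lieBracket]

def jacobianF0 (c1 c2 c3 c5 c6 : ℝ) (x : Fin 3 → ℝ) : Matrix (Fin 3) (Fin 3) ℝ :=
  !![c1, 0, c2; 0, 0, c3; c5, 0, 2 * c6 * x 2]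

theorem hasFDerivAt_F0 (c1 c2 c3 c4 c5 c6 : ℝ) (x : Fin 3 → ℝ) :
    HasFDerivAt (F0 c1 c2 c3 c4 c5 c6)
      (toLin' (jacobianF0 c1 c2 c3 c5 c6 x)).toContinuousLinearMap x := by
  have coord (i : Fin 3) := hasFDerivAt_apply (𝕜 := ℝ) i x
  rw [hasFDerivAt_pi']
  intro i
  fin_cases i
  · refine (((coord 0).const_mul c1).add ((coord 2).const_mul c2)).congr_fderiv ?_
    ext v; simp [jacobianF0, dotProduct, Fin.sum_univ_three]
  · refine ((coord 2).const_mul c3).congr_fderiv ?_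
    ext v; simp [jacobianF0, dotProduct, Fin.sum_univ_three]
  · refine ((((coord 0).const_mul c5).const_add c4).add
      (((coord 2).pow 2).const_mul c6)).congr_fderiv ?_
    ext v; simp [jacobianF0, dotProduct, Fin.sum_univ_three]; ring

theorem lieBracket_F0_F1 (c1 c2 c3 c4 c5 c6 c7 : ℝ) (x : Fin 3 → ℝ) :
    lieBracket (F0 c1 c2 c3 c4 c5 c6) (F1 c7) x = ![-(c1 * c7), 0, -(c5 * c7)] := by
  rw [show F1 c7 = fun _ => ![c7, 0, 0] from rfl, lieBracket_const_right,
    (hasFDerivAt_F0 c1 c2 c3 c4 c5 c6 x).fderiv]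
  ext i
  fin_cases i <;> simp [jacobianF0, mul_comm]

theorem det_F0_F1_lieBracket (c1 c2 c3 c4 c5 c6 c7 : ℝ) (x : Fin 3 → ℝ) :
    (Matrix.of fun i j =>
        (![F0 c1 c2 c3 c4 c5 c6 x, F1 c7 x,
           lieBracket (F0 c1 c2 c3 c4 c5 c6) (F1 c7) x] : Fin 3 → Fin 3 → ℝ) j i).det
      = c3 * c5 * c7 ^ 2 * x 2 := by
  rw [det_fin_three, lieBracket_F0_F1]
  simp only [F0, F1, of_apply, cons_val, cons_val_zero, cons_val_one]
  ring

theorem stmt2_general (c1 c2 c3 c4 c5 c6 c7 : ℝ)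
    (h3 : 0 < c3) (h5 : 0 < c5) (h7 : 0 < c7) (x : Fin 3 → ℝ) :
    (Matrix.of fun i j =>
        (![F0 c1 c2 c3 c4 c5 c6 x, F1 c7 x,
           lieBracket (F0 c1 c2 c3 c4 c5 c6) (F1 c7) x] : Fin 3 → Fin 3 → ℝ) j i).det
      = c3 * c5 * c7 ^ 2 * x 2 ∧
    (LinearIndependent ℝ
        ![F0 c1 c2 c3 c4 c5 c6 x, F1 c7 x,
          lieBracket (F0 c1 c2 c3 c4 c5 c6) (F1 c7) x] ↔ x 2 ≠ 0) ∧
    (Submodule.span ℝ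
        (Set.range
          ![F0 c1 c2 c3 c4 c5 c6 x, F1 c7 x,
            lieBracket (F0 c1 c2 c3 c4 c5 c6) (F1 c7) x]) = ⊤ ↔ x 2 ≠ 0) := by
  have hdet := det_F0_F1_lieBracket c1 c2 c3 c4 c5 c6 c7 x
  have hdet_ne_zero : c3 * c5 * c7 ^ 2 * x 2 ≠ 0 ↔ x 2 ≠ 0 :=
    mul_ne_zero_iff_left (by positivity)
  refine ⟨hdet, ?_, ?_⟩
  · exact (linearIndependent_col_iff_det_ne_zero _).trans (hdet ▸ hdet_ne_zero)
  · exact (span_range_col_eq_top_iff_det_ne_zero _).trans (hdet ▸ hdet_ne_zero)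

theorem stmt2 (c1 c2 c3 c4 c5 c6 c7 : ℝ)
    (h1 : c1 < 0) (h2 : c2 < 0) (h3 : 0 < c3) (h4 : c4 < 0)
    (h5 : 0 < c5) (h6 : c6 < 0) (h7 : 0 < c7) (x : Fin 3 → ℝ) :
    (Matrix.of fun i j =>
        (![F0 c1 c2 c3 c4 c5 c6 x, F1 c7 x,
           lieBracket (F0 c1 c2 c3 c4 c5 c6) (F1 c7) x] : Fin 3 → Fin 3 → ℝ) j i).det
      = c3 * c5 * c7 ^ 2 * x 2 ∧
    (LinearIndependent ℝ
        ![F0 c1 c2 c3 c4 c5 c6 x, F1 c7 x,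
          lieBracket (F0 c1 c2 c3 c4 c5 c6) (F1 c7) x] ↔ x 2 ≠ 0) ∧
    (Submodule.span ℝ
        (Set.range
          ![F0 c1 c2 c3 c4 c5 c6 x, F1 c7 x,
            lieBracket (F0 c1 c2 c3 c4 c5 c6) (F1 c7) x]) = ⊤ ↔ x 2 ≠ 0) :=
  stmt2_general c1 c2 c3 c4 c5 c6 c7 h3 h5 h7 x
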